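/- Let d ≥ 3 and 1 ≤ k ≤ ⌈(d−2)/2⌉ be integers and let p be an IDF prime for (d,k). Suppose α, β are rational numbers and n, m ≥ 1 are integers such that f^n_{α,β}(0) = 0 and f^m_{α,β}(1) = 1. Then α ≠ 0 and v_p(α) = 0; in particular α is nonzero modulo p. -/

import Mathlib

open Finset Function

/-- The coefficient `b_i` of `z^(d-i)` in the normalized dynamical Belyi polynomial
`B_{d,k}`. -/
def belyiCoeff (d k i : ℕ) : ℚ :=
  ((-1 : ℚ) ^ (k - i) / ((k - i).factorial * i.factorial)) *
    ∏ j ∈ (Finset.range (k + 1)).erase i, ((d : ℚ) - (j : ℚ))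

/-- The normalized dynamical Belyi polynomial `B_{d,k}` as a function on `ℚ`. -/
def belyi (d k : ℕ) (z : ℚ) : ℚ :=
  ∑ i ∈ Finset.range (k + 1), belyiCoeff d k i * z ^ (d - i)

/-- The map `f_{a,c}(z) = a · B_{d,k}(z) + c`. -/
def belyiMap (d k : ℕ) (a c z : ℚ) : ℚ := a * belyi d k z + c

/-- `p` is an index divisor free (IDF) prime for the pair `(d,k)`:
`p` is a prime with `p > k`, `p ∣ d - r` for some `r ≤ k`, and `r ∤ v_p(d-r)`. -/
def IsIDFPrime (d k p : ℕ) : Prop :=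
  p.Prime ∧ k < p ∧ ∃ r ≤ k, p ∣ (d - r) ∧ ¬ (r ∣ padicValNat p (d - r))

/-- A rational number is `p`-integral if it is zero or has nonnegative `p`-adic valuation. -/
def PIntegral (p : ℕ) (x : ℚ) : Prop := x = 0 ∨ 0 ≤ padicValRat p x

/-!
Let `z` have the largest `p`-adic absolute value `ρ ≥ 1` on the union of the orbits of `0` and `1`,
a finite forward-invariant set. Since `p > k`, the coefficient `b_r` of `B_{d,k}` is a `p`-adic unit
while every other `b_i` has valuation `v_p(d - r) ≥ 1`; for `|z| ≥ 1` the condition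
`r ∤ v_p(d - r)` makes a single term of `B(z)` dominate, so `|α b_i| ρ^(d-i) ≤ |f(z) - β| ≤ ρ` for
every `i`. The term `i = r` gives `|α| ≤ 1`. If `|α| < 1`, the same bounds make `f` non-expanding on
the orbits while `|f(0) - f(1)| ≤ |α| < 1 = |0 - 1|`, which two points of a common period forbid.
Hence `|α|_p = 1`.
-/

namespace Function

variable {α : Type*} {f : α → α} {x : α} {N : ℕ}

theorem IsPeriodicPt.finite_range_iterate (hx : IsPeriodicPt f N x) (hN : 0 < N) :
    (Set.range fun t => f^[t] x).Finite := by
  refine ((Set.finite_Iio N).image fun t => f^[t] x).subset ?_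
  rintro _ ⟨t, rfl⟩
  exact ⟨t % N, Nat.mod_lt t hN, hx.iterate_mod_apply t⟩

theorem mapsTo_range_iterate (f : α → α) (x : α) :
    Set.MapsTo f (Set.range fun t => f^[t] x) (Set.range fun t => f^[t] x) := by
  rintro _ ⟨t, rfl⟩
  exact ⟨t + 1, iterate_succ_apply' f t x⟩

theorem IsPeriodicPt.le_apply_of_nonexpanding {β : Type*} [Preorder β] {S : Set α}
    {D : α → α → β} (hS : Set.MapsTo f S S) (hD : ∀ x ∈ S, ∀ y ∈ S, D (f x) (f y) ≤ D x y)
    {y : α} (hxS : x ∈ S) (hyS : y ∈ S) (hx : IsPeriodicPt f N x) (hy : IsPeriodicPt f N y)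
    (hN : 0 < N) : D x y ≤ D (f x) (f y) := by
  have hiter : ∀ t, ∀ x ∈ S, ∀ y ∈ S, D (f^[t] x) (f^[t] y) ≤ D x y := by
    intro t
    induction t with
    | zero => exact fun _ _ _ _ => le_rfl
    | succ t ih =>
      intro x hx y hy
      rw [iterate_succ_apply, iterate_succ_apply]
      exact (ih _ (hS hx) _ (hS hy)).trans (hD x hx y hy)
  obtain ⟨t, rfl⟩ : ∃ t, N = t + 1 := ⟨N - 1, by omega⟩
  calc D x y = D (f^[t] (f x)) (f^[t] (f y)) := by
        rw [← iterate_succ_apply, ← iterate_succ_apply, hx.eq, hy.eq]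
    _ ≤ D (f x) (f y) := hiter t _ (hS hxS) _ (hS hyS)

end Function

namespace padicNorm

variable {p : ℕ} [Fact p.Prime]

theorem le_iff_padicValRat_le {x y : ℚ} (hx : x ≠ 0) (hy : y ≠ 0) :
    padicNorm p x ≤ padicNorm p y ↔ padicValRat p y ≤ padicValRat p x := by
  rw [padicNorm.eq_zpow_of_nonzero hx, padicNorm.eq_zpow_of_nonzero hy,
    zpow_le_zpow_iff_right₀ (mod_cast (Fact.out : p.Prime).one_lt), neg_le_neg_iff]

theorem lt_iff_padicValRat_lt {x y : ℚ} (hx : x ≠ 0) (hy : y ≠ 0) :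
    padicNorm p x < padicNorm p y ↔ padicValRat p y < padicValRat p x := by
  rw [← not_le, le_iff_padicValRat_le hy hx, not_le]

theorem le_one_iff_padicValRat_nonneg {x : ℚ} (hx : x ≠ 0) :
    padicNorm p x ≤ 1 ↔ 0 ≤ padicValRat p x := by
  simpa using le_iff_padicValRat_le (p := p) hx one_ne_zero

theorem one_le_iff_padicValRat_nonpos {x : ℚ} (hx : x ≠ 0) :
    1 ≤ padicNorm p x ↔ padicValRat p x ≤ 0 := by
  simpa using le_iff_padicValRat_le (p := p) one_ne_zero hx

theorem eq_one_iff_padicValRat_eq_zero {x : ℚ} (hx : x ≠ 0) :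
    padicNorm p x = 1 ↔ padicValRat p x = 0 := by
  rw [le_antisymm_iff, le_one_iff_padicValRat_nonneg hx, one_le_iff_padicValRat_nonpos hx]
  omega

theorem sum_eq_of_lt {ι : Type*} [DecidableEq ι] {s : Finset ι} {F : ι → ℚ} {i₀ : ι}
    (hi₀ : i₀ ∈ s) (hF : ∀ i ∈ s, i ≠ i₀ → padicNorm p (F i) < padicNorm p (F i₀)) :
    padicNorm p (∑ i ∈ s, F i) = padicNorm p (F i₀) := by
  rw [← add_sum_erase s F hi₀]
  obtain hs | hs := (s.erase i₀).eq_empty_or_nonempty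
  · simp [hs]
  have hrest : padicNorm p (∑ i ∈ s.erase i₀, F i) < padicNorm p (F i₀) :=
    sum_lt hs fun i hi => hF i (mem_of_mem_erase hi) (ne_of_mem_erase hi)
  rw [add_eq_max_of_ne hrest.ne', max_eq_left hrest.le]

theorem pow_succ_sub_pow_succ_le {x y ρ : ℚ} (hx : padicNorm p x ≤ ρ) (hy : padicNorm p y ≤ ρ)
    (j : ℕ) : padicNorm p (x ^ (j + 1) - y ^ (j + 1)) ≤ ρ ^ j * padicNorm p (x - y) := by
  have hρ : 0 ≤ ρ := (padicNorm.nonneg x).trans hx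
  rw [← geom_sum₂_mul, padicNorm.mul, Nat.add_sub_cancel]
  refine mul_le_mul_of_nonneg_right ?_ (padicNorm.nonneg _)
  refine sum_le' (p := p) (fun i hi => ?_) (pow_nonneg hρ j)
  rw [padicNorm.mul, IsAbsoluteValue.abv_pow (padicNorm p), IsAbsoluteValue.abv_pow (padicNorm p)]
  calc padicNorm p x ^ i * padicNorm p y ^ (j - i) ≤ ρ ^ i * ρ ^ (j - i) :=
        mul_le_mul (pow_le_pow_left₀ (padicNorm.nonneg _) hx _)
          (pow_le_pow_left₀ (padicNorm.nonneg _) hy _) (pow_nonneg (padicNorm.nonneg _) _)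
          (pow_nonneg hρ _)
    _ = ρ ^ j := by rw [← pow_add]; congr 1; have := mem_range.1 hi; omega

end padicNorm

namespace padicValRat

variable {p : ℕ} [Fact p.Prime]

protected theorem prod {ι : Type*} (s : Finset ι) {F : ι → ℚ} (hF : ∀ i ∈ s, F i ≠ 0) :
    padicValRat p (∏ i ∈ s, F i) = ∑ i ∈ s, padicValRat p (F i) := by
  classical
  induction s using Finset.induction_on with
  | empty => simp
  | insert j s hj ih =>
    have hs : ∀ i ∈ s, F i ≠ 0 := fun i hi => hF i (mem_insert_of_mem hi)
    rw [prod_insert hj, sum_insert hj, padicValRat.mul (hF j (mem_insert_self j s))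
      (prod_ne_zero_iff.2 hs), ih hs]

end padicValRat

section Belyi

variable {d k : ℕ}

theorem belyi_zero (hkd : k < d) : belyi d k 0 = 0 :=
  sum_eq_zero fun i hi => by rw [zero_pow (by have := mem_range.1 hi; omega), mul_zero]

theorem belyiMap_sub_belyiMap (a c x y : ℚ) :
    belyiMap d k a c x - belyiMap d k a c y =
      ∑ i ∈ range (k + 1), a * belyiCoeff d k i * (x ^ (d - i) - y ^ (d - i)) := by
  rw [belyiMap, belyiMap, add_sub_add_right_eq_sub, ← mul_sub, belyi, belyi, ← sum_sub_distrib,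
    mul_sum]
  exact sum_congr rfl fun i _ => by ring

theorem belyiCoeff_ne_zero (hkd : k < d) {i : ℕ} : belyiCoeff d k i ≠ 0 := by
  refine mul_ne_zero (div_ne_zero (pow_ne_zero _ (by norm_num)) (by positivity))
    (prod_ne_zero_iff.2 fun j hj => sub_ne_zero.2 ?_)
  have := mem_range.1 (mem_of_mem_erase hj)
  exact_mod_cast (show d ≠ j by omega)

variable {p : ℕ} [Fact p.Prime]

theorem padicValRat_belyiCoeff_eq_sum (hkd : k < d) (hkp : k < p) {i : ℕ} (hi : i ≤ k) :
    padicValRat p (belyiCoeff d k i) =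
      ∑ j ∈ (range (k + 1)).erase i, (padicValNat p (d - j) : ℤ) := by
  have hp : p.Prime := Fact.out
  have hfac : ¬ p ∣ (k - i).factorial * i.factorial := by
    rw [hp.dvd_mul, hp.dvd_factorial, hp.dvd_factorial]
    omega
  have hcast : ∀ j ∈ (range (k + 1)).erase i, (d : ℚ) - j = ((d - j : ℕ) : ℚ) := fun j hj => by
    have := mem_range.1 (mem_of_mem_erase hj)
    rw [Nat.cast_sub (by omega)]
  have hpos : ∀ j ∈ (range (k + 1)).erase i, ((d - j : ℕ) : ℚ) ≠ 0 := fun j hj => by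
    have := mem_range.1 (mem_of_mem_erase hj)
    exact_mod_cast (show d - j ≠ 0 by omega)
  have hsign : ((-1 : ℚ) ^ (k - i)) ≠ 0 := pow_ne_zero _ (by norm_num)
  have hden : (((k - i).factorial * i.factorial : ℕ) : ℚ) ≠ 0 := by positivity
  rw [belyiCoeff, prod_congr rfl hcast, ← Nat.cast_mul,
    padicValRat.mul (div_ne_zero hsign hden) (prod_ne_zero_iff.2 hpos),
    padicValRat.div hsign hden, padicValRat.prod _ hpos, padicValRat.pow, padicValRat.neg,
    padicValRat.one, padicValRat.of_nat, padicValNat.eq_zero_of_not_dvd hfac]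
  simp [padicValRat.of_nat]

theorem padicNorm_belyiCoeff_le_one (hkd : k < d) (hkp : k < p) {i : ℕ} (hi : i ≤ k) :
    padicNorm p (belyiCoeff d k i) ≤ 1 := by
  rw [padicNorm.le_one_iff_padicValRat_nonneg (belyiCoeff_ne_zero hkd),
    padicValRat_belyiCoeff_eq_sum hkd hkp hi]
  positivity

theorem padicNorm_belyi_le_one (hkd : k < d) (hkp : k < p) {z : ℚ} (hz : padicNorm p z ≤ 1) :
    padicNorm p (belyi d k z) ≤ 1 := by
  refine padicNorm.sum_le' (fun i hi => ?_) zero_le_one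
  rw [padicNorm.mul, IsAbsoluteValue.abv_pow (padicNorm p)]
  exact mul_le_one₀ (padicNorm_belyiCoeff_le_one hkd hkp (by have := mem_range.1 hi; omega))
    (pow_nonneg (padicNorm.nonneg _) _) (pow_le_one₀ (padicNorm.nonneg _) hz)

end Belyi

section IDFPrime

variable {d k p r : ℕ}

theorem padicValNat_sub_eq_zero (hkd : k < d) (hkp : k < p) (hrk : r ≤ k) (hpd : p ∣ d - r)
    {j : ℕ} (hj : j ≤ k) (hjr : j ≠ r) : padicValNat p (d - j) = 0 := by
  refine padicValNat.eq_zero_of_not_dvd fun hpj => hjr ?_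
  have h := dvd_sub (Int.natCast_dvd_natCast.2 hpj) (Int.natCast_dvd_natCast.2 hpd)
  push_cast [Nat.cast_sub (show j ≤ d by omega), Nat.cast_sub (show r ≤ d by omega)] at h
  have := Int.eq_zero_of_abs_lt_dvd h (by rw [abs_lt]; omega)
  omega

variable [Fact p.Prime]

theorem padicValRat_belyiCoeff (hkd : k < d) (hkp : k < p) (hrk : r ≤ k) (hpd : p ∣ d - r)
    {i : ℕ} (hi : i ≤ k) :
    padicValRat p (belyiCoeff d k i) = if i = r then 0 else (padicValNat p (d - r) : ℤ) := by
  have hterm : ∀ j ∈ (range (k + 1)).erase i,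
      (padicValNat p (d - j) : ℤ) = if j = r then (padicValNat p (d - r) : ℤ) else 0 := by
    intro j hj
    split_ifs with hjr
    · rw [hjr]
    · have := mem_range.1 (mem_of_mem_erase hj)
      rw [padicValNat_sub_eq_zero hkd hkp hrk hpd (by omega) hjr, Nat.cast_zero]
  rw [padicValRat_belyiCoeff_eq_sum hkd hkp hi, sum_congr rfl hterm, sum_ite_eq']
  simp only [mem_erase, mem_range]
  split_ifs <;> omega

theorem padicNorm_belyiCoeff_self (hkd : k < d) (hkp : k < p) (hrk : r ≤ k) (hpd : p ∣ d - r) :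
    padicNorm p (belyiCoeff d k r) = 1 := by
  rw [padicNorm.eq_one_iff_padicValRat_eq_zero (belyiCoeff_ne_zero hkd),
    padicValRat_belyiCoeff hkd hkp hrk hpd hrk, if_pos rfl]

theorem exists_dominant_belyi_term (hkd : k < d) (hkp : k < p) (hrk : r ≤ k) (hpd : p ∣ d - r)
    (hnd : ¬ r ∣ padicValNat p (d - r)) {z : ℚ} (hz : 1 ≤ padicNorm p z) :
    ∃ i₀ ≤ k, ∀ i ≤ k, i ≠ i₀ → padicNorm p (belyiCoeff d k i * z ^ (d - i)) <
      padicNorm p (belyiCoeff d k i₀ * z ^ (d - i₀)) := by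
  have hz0 : z ≠ 0 := by rintro rfl; rw [padicNorm.zero] at hz; norm_num at hz
  have hterm : ∀ i, belyiCoeff d k i * z ^ (d - i) ≠ 0 :=
    fun i => mul_ne_zero (belyiCoeff_ne_zero hkd) (pow_ne_zero _ hz0)
  set E : ℤ := (padicValNat p (d - r) : ℤ)
  set u := padicValRat p z
  have hu : u ≤ 0 := (padicNorm.one_le_iff_padicValRat_nonpos hz0).1 hz
  have hval : ∀ i ≤ k, padicValRat p (belyiCoeff d k i * z ^ (d - i)) =
      (if i = r then 0 else E) + ((d : ℤ) - i) * u := fun i hi => by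
    rw [padicValRat.mul (belyiCoeff_ne_zero hkd) (pow_ne_zero _ hz0), padicValRat.pow,
      padicValRat_belyiCoeff hkd hkp hrk hpd hi, Nat.cast_sub (by omega)]
  -- Only the terms `i = 0` and `i = r` can compete, and `r ∤ E` rules out a tie between them.
  have hE : E ≠ r * -u := fun h =>
    hnd (Int.natCast_dvd_natCast.1 ⟨-u, by rw [← h]⟩)
  suffices ∃ i₀ ≤ k, ∀ i ≤ k, i ≠ i₀ → padicValRat p (belyiCoeff d k i₀ * z ^ (d - i₀)) <
      padicValRat p (belyiCoeff d k i * z ^ (d - i)) by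
    obtain ⟨i₀, hi₀, hlt⟩ := this
    exact ⟨i₀, hi₀, fun i hi hne => (padicNorm.lt_iff_padicValRat_lt (hterm i) (hterm i₀)).2
      (hlt i hi hne)⟩
  rcases lt_or_gt_of_ne hE with hlt | hgt
  · refine ⟨0, Nat.zero_le k, fun i hi hi0 => ?_⟩
    have hr0 : r ≠ 0 := by rintro rfl; simp at hlt; omega
    have hu0 : 0 < -u := pos_of_mul_pos_right ((Int.natCast_nonneg _).trans_lt hlt) (by positivity)
    rw [hval 0 (Nat.zero_le k), hval i hi, if_neg (Ne.symm hr0), Nat.cast_zero, sub_zero]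
    split_ifs with hir
    · subst hir
      linarith
    · nlinarith [mul_pos (show (0 : ℤ) < i by omega) hu0]
  · refine ⟨r, hrk, fun i hi hir => ?_⟩
    have hiu : (i : ℤ) * u ≤ 0 := mul_nonpos_of_nonneg_of_nonpos (by omega) hu
    rw [hval r hrk, hval i hi, if_pos rfl, if_neg hir]
    nlinarith

theorem padicNorm_belyiCoeff_mul_pow_le (hkd : k < d) (hkp : k < p) (hrk : r ≤ k)
    (hpd : p ∣ d - r) (hnd : ¬ r ∣ padicValNat p (d - r)) {z : ℚ} (hz : 1 ≤ padicNorm p z)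
    {i : ℕ} (hi : i ≤ k) :
    padicNorm p (belyiCoeff d k i * z ^ (d - i)) ≤ padicNorm p (belyi d k z) := by
  obtain ⟨i₀, hi₀, hdom⟩ := exists_dominant_belyi_term hkd hkp hrk hpd hnd hz
  rw [belyi, padicNorm.sum_eq_of_lt (mem_range.2 (by omega))
    fun j hj hji₀ => hdom j (by have := mem_range.1 hj; omega) hji₀]
  rcases eq_or_ne i i₀ with rfl | hne
  · exact le_rfl
  · exact (hdom i hi hne).le

end IDFPrime

section BelyiMap

variable {d k p r : ℕ} [Fact p.Prime] {a c : ℚ}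

theorem padicNorm_belyiMap_sub_le (hkd : k < d) {x y ρ : ℚ} (hρ : 0 < ρ)
    (hcoeff : ∀ i ≤ k, padicNorm p a * padicNorm p (belyiCoeff d k i) * ρ ^ (d - i) ≤ ρ)
    (hx : padicNorm p x ≤ ρ) (hy : padicNorm p y ≤ ρ) :
    padicNorm p (belyiMap d k a c x - belyiMap d k a c y) ≤ padicNorm p (x - y) := by
  rw [belyiMap_sub_belyiMap]
  refine padicNorm.sum_le' (fun i hi => ?_) (padicNorm.nonneg _)
  have hik : i ≤ k := by have := mem_range.1 hi; omega
  obtain ⟨j, hj⟩ : ∃ j, d - i = j + 1 := ⟨d - i - 1, by omega⟩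
  have hcoeff' : padicNorm p a * padicNorm p (belyiCoeff d k i) * ρ ^ j ≤ 1 := by
    have h := hcoeff i hik
    rw [hj, pow_succ, ← mul_assoc] at h
    exact le_of_mul_le_mul_right (by rwa [one_mul]) hρ
  have hnonneg : 0 ≤ padicNorm p a * padicNorm p (belyiCoeff d k i) :=
    mul_nonneg (padicNorm.nonneg _) (padicNorm.nonneg _)
  rw [hj, padicNorm.mul, padicNorm.mul]
  calc padicNorm p a * padicNorm p (belyiCoeff d k i) * padicNorm p (x ^ (j + 1) - y ^ (j + 1))
      ≤ padicNorm p a * padicNorm p (belyiCoeff d k i) * (ρ ^ j * padicNorm p (x - y)) :=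
        mul_le_mul_of_nonneg_left (padicNorm.pow_succ_sub_pow_succ_le hx hy j) hnonneg
    _ = padicNorm p a * padicNorm p (belyiCoeff d k i) * ρ ^ j * padicNorm p (x - y) := by ring
    _ ≤ padicNorm p (x - y) :=
        mul_le_of_le_one_left (padicNorm.nonneg _) hcoeff'

theorem padicNorm_mul_belyiCoeff_mul_pow_le (hkd : k < d) (hkp : k < p) (hrk : r ≤ k)
    (hpd : p ∣ d - r) (hnd : ¬ r ∣ padicValNat p (d - r)) {z : ℚ} (hz : 1 ≤ padicNorm p z)
    (hc : padicNorm p c ≤ padicNorm p z) (hfz : padicNorm p (belyiMap d k a c z) ≤ padicNorm p z)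
    {i : ℕ} (hi : i ≤ k) :
    padicNorm p a * padicNorm p (belyiCoeff d k i) * padicNorm p z ^ (d - i) ≤ padicNorm p z :=
  calc padicNorm p a * padicNorm p (belyiCoeff d k i) * padicNorm p z ^ (d - i)
      = padicNorm p a * padicNorm p (belyiCoeff d k i * z ^ (d - i)) := by
        rw [padicNorm.mul, IsAbsoluteValue.abv_pow (padicNorm p), mul_assoc]
    _ ≤ padicNorm p a * padicNorm p (belyi d k z) :=
        mul_le_mul_of_nonneg_left (padicNorm_belyiCoeff_mul_pow_le hkd hkp hrk hpd hnd hz hi)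
          (padicNorm.nonneg _)
    _ = padicNorm p (belyiMap d k a c z - c) := by
        rw [belyiMap, add_sub_cancel_right, padicNorm.mul]
    _ ≤ padicNorm p z := padicNorm.sub.trans (max_le hfz hc)

theorem exists_radius_of_mapsTo_belyiMap (hkd : k < d) (hkp : k < p) (hrk : r ≤ k)
    (hpd : p ∣ d - r) (hnd : ¬ r ∣ padicValNat p (d - r)) {S : Set ℚ}
    (hS : Set.MapsTo (belyiMap d k a c) S S) (hfin : S.Finite) (h0 : 0 ∈ S) (h1 : 1 ∈ S) :
    ∃ ρ : ℚ, 1 ≤ ρ ∧ (∀ x ∈ S, padicNorm p x ≤ ρ) ∧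
      ∀ i ≤ k, padicNorm p a * padicNorm p (belyiCoeff d k i) * ρ ^ (d - i) ≤ ρ := by
  obtain ⟨z, hzS, hmax⟩ := S.exists_max_image (padicNorm p) hfin ⟨0, h0⟩
  have hz : 1 ≤ padicNorm p z := padicNorm.one (p := p) ▸ hmax 1 h1
  have hc : padicNorm p c ≤ padicNorm p z := by
    simpa [belyiMap, belyi_zero hkd] using hmax _ (hS h0)
  exact ⟨padicNorm p z, hz, hmax, fun i hi =>
    padicNorm_mul_belyiCoeff_mul_pow_le hkd hkp hrk hpd hnd hz hc (hmax _ (hS hzS)) hi⟩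

theorem padicNorm_le_one_of_belyiCoeff_bound (hkd : k < d) (hkp : k < p) (hrk : r ≤ k)
    (hpd : p ∣ d - r) {ρ : ℚ} (hρ : 1 ≤ ρ)
    (h : padicNorm p a * padicNorm p (belyiCoeff d k r) * ρ ^ (d - r) ≤ ρ) :
    padicNorm p a ≤ 1 := by
  rw [padicNorm_belyiCoeff_self hkd hkp hrk hpd, mul_one] at h
  refine le_of_mul_le_mul_right ?_ (zero_lt_one.trans_le hρ)
  calc padicNorm p a * ρ ≤ padicNorm p a * ρ ^ (d - r) :=
        mul_le_mul_of_nonneg_left (le_self_pow₀ hρ (by omega)) (padicNorm.nonneg _)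
    _ ≤ 1 * ρ := by rwa [one_mul]

theorem padicNorm_eq_one_of_isPeriodicPt (hkd : k < d) (hkp : k < p) (hrk : r ≤ k)
    (hpd : p ∣ d - r) (hnd : ¬ r ∣ padicValNat p (d - r)) {N : ℕ} (hN : 0 < N)
    (h0 : IsPeriodicPt (belyiMap d k a c) N 0) (h1 : IsPeriodicPt (belyiMap d k a c) N 1) :
    padicNorm p a = 1 := by
  set f := belyiMap d k a c
  set S := (Set.range fun t => f^[t] 0) ∪ Set.range fun t => f^[t] 1
  have h0S : (0 : ℚ) ∈ S := Or.inl ⟨0, rfl⟩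
  have h1S : (1 : ℚ) ∈ S := Or.inr ⟨0, rfl⟩
  have hS : Set.MapsTo f S S := (mapsTo_range_iterate f 0).union_union (mapsTo_range_iterate f 1)
  obtain ⟨ρ, hρ, hSρ, hcoeff⟩ := exists_radius_of_mapsTo_belyiMap hkd hkp hrk hpd hnd hS
    ((h0.finite_range_iterate hN).union (h1.finite_range_iterate hN)) h0S h1S
  refine le_antisymm (padicNorm_le_one_of_belyiCoeff_bound hkd hkp hrk hpd hρ (hcoeff r hrk))
    (not_lt.1 fun ha => ?_)
  have hlip : ∀ x ∈ S, ∀ y ∈ S, padicNorm p (f x - f y) ≤ padicNorm p (x - y) :=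
    fun x hx y hy => padicNorm_belyiMap_sub_le hkd (by linarith) hcoeff (hSρ x hx) (hSρ y hy)
  have hcontract : padicNorm p (f 0 - f 1) < padicNorm p (0 - 1) := by
    rw [show f 0 - f 1 = -(a * belyi d k 1) by simp [f, belyiMap, belyi_zero hkd], padicNorm.neg,
      padicNorm.mul, zero_sub, padicNorm.neg, padicNorm.one]
    exact (mul_le_of_le_one_right (padicNorm.nonneg _)
      (padicNorm_belyi_le_one hkd hkp padicNorm.one.le)).trans_lt ha
  exact (h0.le_apply_of_nonexpanding (D := fun x y => padicNorm p (x - y)) hS hlip h0S h1S h1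
    hN).not_gt hcontract

end BelyiMap

theorem padicValRat_eq_zero_of_pcf_general (d k p : ℕ) (hd : 3 ≤ d)
    (hk2 : k ≤ (d - 1) / 2) (hp : IsIDFPrime d k p)
    (α β : ℚ) (n m : ℕ) (hn : 1 ≤ n) (hm : 1 ≤ m)
    (h0 : (belyiMap d k α β)^[n] 0 = 0) (h1 : (belyiMap d k α β)^[m] 1 = 1) :
    α ≠ 0 ∧ padicValRat p α = 0 := by
  obtain ⟨hpp, hkp, r, hrk, hpd, hnd⟩ := hp
  have : Fact p.Prime := ⟨hpp⟩
  have ha : padicNorm p α = 1 :=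
    padicNorm_eq_one_of_isPeriodicPt (by omega) hkp hrk hpd hnd (Nat.mul_pos hn hm)
      (IsPeriodicPt.mul_const h0 m) (IsPeriodicPt.const_mul h1 n)
  have hα : α ≠ 0 := by
    rintro rfl
    rw [padicNorm.zero] at ha
    exact zero_ne_one ha
  exact ⟨hα, (padicNorm.eq_one_iff_padicValRat_eq_zero hα).1 ha⟩

/-- (Lemma: `v_p(α) = 0`.)  If both critical points `0` and `1` are
periodic for `f_{α,β}`, then `α` is nonzero with `v_p(α) = 0`; in particular `α` is
nonzero modulo `p`. -/
theorem padicValRat_eq_zero_of_pcf (d k p : ℕ) (hd : 3 ≤ d) (hk1 : 1 ≤ k)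
    (hk2 : k ≤ (d - 1) / 2) (hp : IsIDFPrime d k p)
    (α β : ℚ) (n m : ℕ) (hn : 1 ≤ n) (hm : 1 ≤ m)
    (h0 : (belyiMap d k α β)^[n] 0 = 0) (h1 : (belyiMap d k α β)^[m] 1 = 1) :
    α ≠ 0 ∧ padicValRat p α = 0 :=
  padicValRat_eq_zero_of_pcf_general d k p hd hk2 hp α β n m hn hm h0 h1
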